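/- Let (X, cl) be a pregeometry and let U, V, W be pairwise disjoint nonempty finite subsets of X such that U ∪ V and V ∪ W are minimal dependent and dim(U ∪ V ∪ W) = |U| + |V| + |W| − 2. Then for every u ∈ U and every v ∈ V, the set (U \ {u}) ∪ (V \ {v}) ∪ W is independent and is a basis of U ∪ V ∪ W; symmetrically, for every v ∈ V and w ∈ W, the set U ∪ (V \ {v}) ∪ (W \ {w}) is independent and is a basis of U ∪ V ∪ W. -/

import Mathlib

/-- A pregeometry: a closure operator with reflexivity, monotonicity, idempotence,
finite character and the exchange property. -/
structure Pregeom (X : Type*) where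
  cl : Set X → Set X
  subset_cl : ∀ A : Set X, A ⊆ cl A
  mono : ∀ {A B : Set X}, A ⊆ B → cl A ⊆ cl B
  idem : ∀ A : Set X, cl (cl A) = cl A
  finChar : ∀ {a : X} {A : Set X}, a ∈ cl A → ∃ A₀ ⊆ A, A₀.Finite ∧ a ∈ cl A₀
  exchange : ∀ {a b : X} {A : Set X}, a ∈ cl (A ∪ {b}) → a ∉ cl A → b ∈ cl (A ∪ {a})

namespace Pregeom

variable {X : Type*}

/-- A set is independent if no element lies in the closure of the remaining elements. -/
def Indep (G : Pregeom X) (Y : Set X) : Prop := ∀ y ∈ Y, y ∉ G.cl (Y \ {y})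

/-- A set is dependent if it is not independent. -/
def Dep (G : Pregeom X) (Y : Set X) : Prop := ¬ G.Indep Y

/-- A set is minimal dependent if it is dependent and every proper subset is independent. -/
def MinDep (G : Pregeom X) (Y : Set X) : Prop := G.Dep Y ∧ ∀ Z ⊂ Y, G.Indep Z

/-- `Z` is a basis of `Y`: an independent subset of `Y` whose closure contains `Y`. -/
def IsBasis (G : Pregeom X) (Z Y : Set X) : Prop := Z ⊆ Y ∧ G.Indep Z ∧ Y ⊆ G.cl Z

end Pregeom

/-!
Both circuits let us re-span everything after deleting one point from each: the deleted point of
`V` lies in the closure of the rest of the circuit `V ∪ W`, and then the deleted point of `U` lies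
in the closure of the rest of `U ∪ V`. The resulting spanning set has exactly
`|U| + |V| + |W| - 2 = dim (U ∪ V ∪ W)` elements, so by the Steinitz exchange lemma it cannot be
dependent. The second family is the first one for the circuits read in the order `W, V, U`.
-/

open Set

namespace Pregeom

variable {X : Type*} {G : Pregeom X} {A B C I T : Set X} {a x : X}

lemma exchange_insert (h : x ∈ G.cl (insert a A)) (hx : x ∉ G.cl A) :
    a ∈ G.cl (insert x A) := by
  simpa only [union_singleton] using G.exchange (by rwa [union_singleton]) hx

lemma cl_subset_cl_of_subset_cl (h : A ⊆ G.cl B) : G.cl A ⊆ G.cl B :=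
  G.idem B ▸ G.mono h

lemma subset_cl_sdiff_singleton (hx : x ∈ G.cl (A \ {x})) : A ⊆ G.cl (A \ {x}) := fun y hy ↦
  (eq_or_ne y x).elim (fun hyx ↦ hyx ▸ hx) fun hyx ↦ G.subset_cl _ ⟨hy, hyx⟩

lemma Indep.mono (hI : G.Indep I) (hAI : A ⊆ I) : G.Indep A :=
  fun y hy hcl ↦ hI y (hAI hy) (G.mono (sdiff_subset_sdiff_left hAI) hcl)

lemma Indep.insert_of_notMem_cl (hI : G.Indep I) (ha : a ∉ G.cl I) : G.Indep (insert a I) := by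
  rintro y hy hcl
  rcases eq_or_ne y a with rfl | hya
  · exact ha (G.mono (sdiff_singleton_subset_iff.2 subset_rfl) hcl)
  · have hyI : y ∈ I := hy.resolve_left hya
    rw [← insert_sdiff_singleton_comm hya.symm] at hcl
    have := exchange_insert hcl (hI y hyI)
    rw [insert_sdiff_singleton, insert_eq_of_mem hyI] at this
    exact ha this

lemma Indep.ncard_le_of_subset_cl (hI : G.Indep I) (hIfin : I.Finite) (hA : A.Finite)
    (hIA : I ⊆ G.cl A) : I.ncard ≤ A.ncard := by
  obtain ⟨n, hn⟩ : ∃ n, (I \ A).ncard = n := ⟨_, rfl⟩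
  induction n generalizing I with
  | zero =>
    rw [ncard_eq_zero hIfin.sdiff, sdiff_eq_empty] at hn
    exact ncard_le_ncard hn hA
  | succ n ih =>
    obtain ⟨x, hxI, hxA⟩ : (I \ A).Nonempty := by
      rw [← ncard_pos hIfin.sdiff, hn]; exact n.succ_pos
    -- Some `a ∈ A` escapes `cl (I \ {x})`, otherwise `x ∈ cl A ⊆ cl (I \ {x})`;
    -- trading `x` for `a` keeps `I` independent and brings it one step closer to `A`.
    obtain ⟨a, haA, ha⟩ :=
      not_subset.1 fun h ↦ hI x hxI (cl_subset_cl_of_subset_cl h (hIA hxI))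
    have haI : a ∉ I \ {x} := fun h ↦ ha (G.subset_cl _ h)
    have hcard : (insert a (I \ {x})).ncard = I.ncard := by
      rw [ncard_insert_of_notMem haI hIfin.sdiff, ncard_sdiff_singleton_add_one hxI hIfin]
    have hdiff : (insert a (I \ {x}) \ A).ncard = n := by
      rw [insert_sdiff_of_mem _ haA, Set.sdiff_sdiff_comm,
        ncard_sdiff_singleton_of_mem (show x ∈ I \ A from ⟨hxI, hxA⟩), hn, Nat.add_sub_cancel]
    rw [← hcard]
    exact ih ((hI.mono sdiff_subset).insert_of_notMem_cl ha) (hIfin.sdiff.insert a)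
      (insert_subset (G.subset_cl _ haA) (sdiff_subset.trans hIA)) hdiff

lemma indep_of_subset_cl_of_ncard_le (hT : T.Finite) (hI : G.Indep I) (hIfin : I.Finite)
    (hIT : I ⊆ G.cl T) (hcard : T.ncard ≤ I.ncard) : G.Indep T := by
  intro t ht hcl
  have := hI.ncard_le_of_subset_cl hIfin hT.sdiff
    (hIT.trans (cl_subset_cl_of_subset_cl (subset_cl_sdiff_singleton hcl)))
  have := ncard_sdiff_singleton_lt_of_mem ht hT
  omega

lemma MinDep.mem_cl_sdiff_singleton (hC : G.MinDep C) (hx : x ∈ C) : x ∈ G.cl (C \ {x}) := by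
  obtain ⟨c, hcC, hc⟩ : ∃ c ∈ C, c ∈ G.cl (C \ {c}) := by
    simpa [Dep, Indep] using hC.1
  rcases eq_or_ne x c with rfl | hxc
  · exact hc
  have hind : G.Indep (C \ {x}) := hC.2 _ (sdiff_singleton_ssubset.2 hx)
  have hc_not : c ∉ G.cl ((C \ {c}) \ {x}) := by
    rw [Set.sdiff_sdiff_comm]; exact hind c ⟨hcC, hxc.symm⟩
  rw [← insert_eq_of_mem (show x ∈ C \ {c} from ⟨hx, hxc⟩), ← insert_sdiff_singleton]
    at hc
  have := exchange_insert hc hc_not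
  rwa [Set.sdiff_sdiff_comm, insert_sdiff_singleton,
    insert_eq_of_mem (show c ∈ C \ {x} from ⟨hcC, hxc.symm⟩)] at this

lemma MinDep.subset_cl_of_sdiff_subset_cl (hC : G.MinDep C) (hx : x ∈ C)
    (h : C \ {x} ⊆ G.cl A) : C ⊆ G.cl A :=
  (subset_cl_sdiff_singleton (hC.mem_cl_sdiff_singleton hx)).trans (cl_subset_cl_of_subset_cl h)

lemma isBasis_of_subset_cl_of_ncard_le {S Z : Set X} (hS : S.Finite) (hZ : G.IsBasis Z S)
    (hTS : T ⊆ S) (hST : S ⊆ G.cl T) (hcard : T.ncard ≤ Z.ncard) : G.IsBasis T S :=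
  ⟨hTS, indep_of_subset_cl_of_ncard_le (hS.subset hTS) hZ.2.1 (hS.subset hZ.1) (hZ.1.trans hST)
    hcard, hST⟩

lemma isBasis_sdiff_union_sdiff_union {U V W Z : Set X} {u v : X} (hU : U.Finite)
    (hV : V.Finite) (hW : W.Finite) (hUV : Disjoint U V) (hUW : Disjoint U W)
    (hVW : Disjoint V W) (hUVdep : G.MinDep (U ∪ V)) (hVWdep : G.MinDep (V ∪ W))
    (hZ : G.IsBasis Z (U ∪ V ∪ W)) (hZcard : Z.ncard = U.ncard + V.ncard + W.ncard - 2)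
    (hu : u ∈ U) (hv : v ∈ V) : G.IsBasis ((U \ {u}) ∪ (V \ {v}) ∪ W) (U ∪ V ∪ W) := by
  set T := (U \ {u}) ∪ (V \ {v}) ∪ W
  have hTS : T ⊆ U ∪ V ∪ W :=
    union_subset_union_left _ (union_subset_union sdiff_subset sdiff_subset)
  have hVW_cl : V ∪ W ⊆ G.cl T := by
    refine hVWdep.subset_cl_of_sdiff_subset_cl (Or.inl hv) fun y hy ↦ G.subset_cl _ ?_
    simp only [T, mem_union, mem_sdiff, mem_singleton_iff] at hy ⊢
    tauto
  have hUV_cl : U ∪ V ⊆ G.cl T := by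
    refine hUVdep.subset_cl_of_sdiff_subset_cl (Or.inl hu) ?_
    rintro y ⟨hyU | hyV, hyu⟩
    · exact G.subset_cl _ (Or.inl (Or.inl ⟨hyU, hyu⟩))
    · exact hVW_cl (Or.inl hyV)
  have hTcard : T.ncard + 2 = U.ncard + V.ncard + W.ncard := by
    rw [ncard_union_eq ((hUW.mono_left sdiff_subset).union_left (hVW.mono_left sdiff_subset))
      (hU.sdiff.union hV.sdiff) hW,
      ncard_union_eq (hUV.mono sdiff_subset sdiff_subset) hU.sdiff hV.sdiff,
      ← ncard_sdiff_singleton_add_one hu hU, ← ncard_sdiff_singleton_add_one hv hV]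
    ring
  exact isBasis_of_subset_cl_of_ncard_le ((hU.union hV).union hW) hZ hTS
    (union_subset hUV_cl (subset_union_right.trans hVW_cl)) (by omega)

end Pregeom

theorem stmt6_general {X : Type*} (G : Pregeom X) (U V W : Set X)
    (hUfin : U.Finite) (hVfin : V.Finite) (hWfin : W.Finite)
    (hUV : Disjoint U V) (hUW : Disjoint U W) (hVW : Disjoint V W)
    (hmd1 : G.MinDep (U ∪ V)) (hmd2 : G.MinDep (V ∪ W))
    (hdim : ∃ Z : Set X, G.IsBasis Z (U ∪ V ∪ W) ∧
      Z.ncard = U.ncard + V.ncard + W.ncard - 2) :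
    (∀ u ∈ U, ∀ v ∈ V,
        G.Indep ((U \ {u}) ∪ (V \ {v}) ∪ W) ∧
        G.IsBasis ((U \ {u}) ∪ (V \ {v}) ∪ W) (U ∪ V ∪ W)) ∧
    (∀ v ∈ V, ∀ w ∈ W,
        G.Indep (U ∪ (V \ {v}) ∪ (W \ {w})) ∧
        G.IsBasis (U ∪ (V \ {v}) ∪ (W \ {w})) (U ∪ V ∪ W)) := by
  obtain ⟨Z, hZ, hZcard⟩ := hdim
  refine ⟨fun u hu v hv ↦ ?_, fun v hv w hw ↦ ?_⟩
  · have hT := G.isBasis_sdiff_union_sdiff_union hUfin hVfin hWfin hUV hUW hVW hmd1 hmd2 hZ hZcard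
      hu hv
    exact ⟨hT.2.1, hT⟩
  · have hWVU : W ∪ V ∪ U = U ∪ V ∪ W := by ac_rfl
    have hT := G.isBasis_sdiff_union_sdiff_union hWfin hVfin hUfin hVW.symm hUW.symm hUV.symm
      (union_comm V W ▸ hmd2) (union_comm U V ▸ hmd1) (hWVU ▸ hZ) (by rw [hZcard]; omega)
      hw hv
    rw [hWVU, show W \ {w} ∪ V \ {v} ∪ U = U ∪ V \ {v} ∪ W \ {w} by ac_rfl] at hT
    exact ⟨hT.2.1, hT⟩

theorem stmt6 {X : Type*} (G : Pregeom X) (U V W : Set X)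
    (hUfin : U.Finite) (hVfin : V.Finite) (hWfin : W.Finite)
    (hUne : U.Nonempty) (hVne : V.Nonempty) (hWne : W.Nonempty)
    (hUV : Disjoint U V) (hUW : Disjoint U W) (hVW : Disjoint V W)
    (hmd1 : G.MinDep (U ∪ V)) (hmd2 : G.MinDep (V ∪ W))
    (hdim : ∃ Z : Set X, G.IsBasis Z (U ∪ V ∪ W) ∧
      Z.ncard = U.ncard + V.ncard + W.ncard - 2) :
    (∀ u ∈ U, ∀ v ∈ V,
        G.Indep ((U \ {u}) ∪ (V \ {v}) ∪ W) ∧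
        G.IsBasis ((U \ {u}) ∪ (V \ {v}) ∪ W) (U ∪ V ∪ W)) ∧
    (∀ v ∈ V, ∀ w ∈ W,
        G.Indep (U ∪ (V \ {v}) ∪ (W \ {w})) ∧
        G.IsBasis (U ∪ (V \ {v}) ∪ (W \ {w})) (U ∪ V ∪ W)) :=
  stmt6_general G U V W hUfin hVfin hWfin hUV hUW hVW hmd1 hmd2 hdim
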